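/- Define e : ℝ × ℝ × ℝ → ℝ by e(a1, a2, a3) = 0 if a1 + a2 + a3 > 2; e(a1, a2, a3) = (1 - a1 - a2)*(1 - a3) if a3 ≥ a1 + a2 and a1 + a2 + a3 ≤ 2; and e(a1, a2, a3) = (a1 + a2 + a3 - 2)^2/4 if a3 < a1 + a2 and a1 + a2 + a3 ≤ 2. Then for fixed a1, a2 with 0 ≤ a1 ≤ a2, the function a3 ↦ e(a1, a2, a3) is antitone (nonincreasing) on the interval [a2, 1], and e(a1, a2, a3) ≥ 0 for all 0 ≤ a1 ≤ a2 ≤ a3 ≤ 1. -/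

import Mathlib

/-!
Put `s = a1 + a2`. For `t ≤ s` the value `e (a1, a2, t)` is `(max 0 (2 - s - t))² / 4` (at `t = s`
both formulas give `(1 - s)²`), and for `s ≤ t ≤ 1` it is `(1 - s)(1 - t)` with `1 - s ≥ 0`.
Both pieces are antitone and agree at `t = s`, so `t ↦ e (a1, a2, t)` is antitone on `(-∞, 1]`;
both pieces are visibly nonnegative.
-/

noncomputable def e : ℝ × ℝ × ℝ → ℝ := fun p =>
  if p.1 + p.2.1 + p.2.2 > 2 then 0
  else if p.2.2 ≥ p.1 + p.2.1 then (1 - p.1 - p.2.1) * (1 - p.2.2)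
  else (p.1 + p.2.1 + p.2.2 - 2) ^ 2 / 4

open Set

section

variable {a1 a2 t : ℝ}

lemma e_eq_of_le_add (ht : t ≤ a1 + a2) :
    e (a1, a2, t) = max 0 (2 - (a1 + a2) - t) ^ 2 / 4 := by
  simp only [e]
  split_ifs with hgt hge
  · rw [max_eq_left (by linarith)]
    ring
  · rw [max_eq_right (by linarith), le_antisymm ht hge]
    ring
  · rw [max_eq_right (by linarith)]
    ring

lemma e_eq_of_add_le (hst : a1 + a2 ≤ t) (ht : t ≤ 1) :
    e (a1, a2, t) = (1 - (a1 + a2)) * (1 - t) := by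
  simp only [e]
  rw [if_neg (by linarith), if_pos hst]
  ring

lemma antitoneOn_e_Iic_add : AntitoneOn (fun t => e (a1, a2, t)) (Iic (a1 + a2)) := by
  intro x hx y hy hxy
  simp only [e_eq_of_le_add hx, e_eq_of_le_add hy]
  gcongr

lemma antitoneOn_e_Icc_add_one : AntitoneOn (fun t => e (a1, a2, t)) (Icc (a1 + a2) 1) := by
  rintro x ⟨hsx, hx1⟩ y ⟨hsy, hy1⟩ hxy
  simp only [e_eq_of_add_le hsx hx1, e_eq_of_add_le hsy hy1]
  gcongr
  linarith

lemma antitoneOn_e_Iic_one : AntitoneOn (fun t => e (a1, a2, t)) (Iic 1) := by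
  by_cases hs : a1 + a2 ≤ 1
  · rw [← Iic_union_Icc_eq_Iic hs]
    exact antitoneOn_e_Iic_add.union_right antitoneOn_e_Icc_add_one isGreatest_Iic (isLeast_Icc hs)
  · exact antitoneOn_e_Iic_add.mono (Iic_subset_Iic.2 (le_of_not_ge hs))

lemma e_nonneg_of_le_one (ht : t ≤ 1) : 0 ≤ e (a1, a2, t) := by
  rcases le_total t (a1 + a2) with hts | hst
  · rw [e_eq_of_le_add hts]
    positivity
  · rw [e_eq_of_add_le hst ht]
    exact mul_nonneg (by linarith) (by linarith)

end

theorem stmt_15_general (a1 a2 : ℝ) :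
    AntitoneOn (fun a3 => e (a1, a2, a3)) (Set.Icc a2 1) ∧
      ∀ a3, a2 ≤ a3 → a3 ≤ 1 → 0 ≤ e (a1, a2, a3) :=
  ⟨antitoneOn_e_Iic_one.mono Icc_subset_Iic_self, fun _ _ ha3 => e_nonneg_of_le_one ha3⟩

theorem stmt_15 (a1 a2 : ℝ) (h0 : 0 ≤ a1) (h12 : a1 ≤ a2) :
    AntitoneOn (fun a3 => e (a1, a2, a3)) (Set.Icc a2 1) ∧
      ∀ a3, a2 ≤ a3 → a3 ≤ 1 → 0 ≤ e (a1, a2, a3) :=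
  stmt_15_general a1 a2
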